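/- Let K be a complete non-Archimedean valued field of characteristic p > 0, λ ∈ K with |λ| = 1 not a root of unity, m = min{n ≥ 1 : |1-λ^n| < 1} existing, and k' the least positive integer with p | k' and m | k'-1. Let f(x) = λx + Σ_{p|i} a_i x^i with a = sup_{i≥2} |a_i|^{1/(i-1)} finite. Then the coefficients of the formal conjugacy g satisfy |b_k| ≤ a^{k-1} / |1 - λ^m|^{⌊(k-k')/(mp) + 1⌋} for all k ≥ 2 (where the floor is taken as 0 if k < k'). -/

import Mathlib

/-!
Comparing coefficients of `xᵏ` in `g ∘ f = λ g` gives `(λ - λᵏ) b_k = ∑_{j<k} b_j [xᵏ] fʲ`.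
In characteristic `p`, `fʲ` with `p ∣ j` is a Frobenius image, so it only has monomials `xⁱ` with
`p ∣ i`; together with the shape of `f` this shows inductively that `b_k = 0` unless `p ∣ k`.
For `p ∣ k` the small divisor `|1 - λ^{k-1}|` equals `1` unless `m ∣ k - 1`. In that case
`k - 1 = m q` with `p ∤ q`, and `1 - λ^{mq} = (1 - λ^m) ∑_{i<q} λ^{mi}` where the sum is
congruent to the unit `q` modulo the maximal ideal, so `|1 - λ^{k-1}| = |1 - λ^m|`. These `k` are
exactly those with `k ≡ k' (mod mp)`, so the exponent of `|1 - λ^m|` in the bound increases by one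
at each of them, and the ultrametric inequality together with `|[xᵏ] fʲ| ≤ a^{k-j}` closes the
induction.
-/

open PowerSeries

/-- The Schröder functional equation `g ∘ f = λ·g`, stated coefficient-wise for the formal
power series `f = F` and `g = ∑ b k · xᵏ`.  Since `F` has zero constant term, the coefficient
of `xⁿ` in `g ∘ F` only involves `Fᵏ` for `k ≤ n`. -/
def SchroderEq {K : Type*} [Field K] (lam : K) (F : PowerSeries K) (b : ℕ → K) : Prop :=
  ∀ n : ℕ,
    (PowerSeries.coeff (R := K) n) (∑ k ∈ Finset.range (n + 1), PowerSeries.C (R := K) (b k) * F ^ k) =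
      lam * b n

namespace PowerSeries

theorem coeff_pow_eq_zero_of_not_dvd {R : Type*} [CommRing R] {p : ℕ} [ExpChar R p]
    (F : R⟦X⟧) {j k : ℕ} (hj : p ∣ j) (hk : ¬ p ∣ k) : coeff k (F ^ j) = 0 := by
  obtain ⟨i, rfl⟩ := hj
  have hp := expChar_ne_zero R p
  have hfrob : map (frobenius R p) (expand p hp (F ^ i)) = (F ^ i) ^ p :=
    MvPowerSeries.map_frobenius_expand p hp
  rw [pow_mul', ← hfrob, coeff_map, coeff_expand_of_not_dvd p hp _ hk, map_zero]

theorem coeff_pow_self {R : Type*} [Semiring R] {F : R⟦X⟧} (hF0 : coeff 0 F = 0) (k : ℕ) :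
    coeff k (F ^ k) = coeff 1 F ^ k := by
  obtain ⟨G, rfl⟩ := (X_dvd_iff (φ := F)).2 (by rwa [← coeff_zero_eq_constantCoeff_apply])
  rw [(commute_X G).symm.mul_pow, coeff_X_pow_mul', if_pos le_rfl, Nat.sub_self,
    coeff_zero_eq_constantCoeff_apply, map_pow, coeff_succ_X_mul, coeff_zero_eq_constantCoeff_apply]

section Bounds

variable {R : Type*} [SeminormedRing R] [IsUltrametricDist R] {a : ℝ}

theorem norm_coeff_mul_le_pow {f g : R⟦X⟧} (hf : ∀ n, ‖coeff n f‖ ≤ a ^ n)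
    (hg : ∀ n, ‖coeff n g‖ ≤ a ^ n) (n : ℕ) : ‖coeff n (f * g)‖ ≤ a ^ n := by
  rw [coeff_mul]
  refine IsUltrametricDist.norm_sum_le_of_forall_le_of_nonneg ((norm_nonneg _).trans (hf n)) ?_
  rintro ⟨i, j⟩ hij
  rw [Finset.HasAntidiagonal.mem_antidiagonal] at hij
  calc ‖coeff i f * coeff j g‖ ≤ ‖coeff i f‖ * ‖coeff j g‖ := norm_mul_le _ _
    _ ≤ a ^ i * a ^ j := mul_le_mul (hf i) (hg j) (norm_nonneg _) ((norm_nonneg _).trans (hf i))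
    _ = a ^ n := by rw [← pow_add, hij]

variable [NormOneClass R]

theorem norm_coeff_pow_le_pow {g : R⟦X⟧} (hg : ∀ n, ‖coeff n g‖ ≤ a ^ n) (j n : ℕ) :
    ‖coeff n (g ^ j)‖ ≤ a ^ n := by
  induction j generalizing n with
  | zero =>
    rw [pow_zero, coeff_one]
    split_ifs with h
    · simp [h]
    · simpa using (norm_nonneg _).trans (hg n)
  | succ j ih => rw [pow_succ]; exact norm_coeff_mul_le_pow ih hg n

theorem norm_coeff_pow_le_pow_sub {F : R⟦X⟧} (hF0 : coeff 0 F = 0)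
    (hF : ∀ n, ‖coeff (n + 1) F‖ ≤ a ^ n) (j k : ℕ) : ‖coeff k (F ^ j)‖ ≤ a ^ (k - j) := by
  obtain ⟨G, rfl⟩ := (X_dvd_iff (φ := F)).2 (by rwa [← coeff_zero_eq_constantCoeff_apply])
  simp only [coeff_succ_X_mul] at hF
  rw [(commute_X G).symm.mul_pow, coeff_X_pow_mul']
  split_ifs
  · exact norm_coeff_pow_le_pow hF j (k - j)
  · simpa using (norm_nonneg _).trans (hF (k - j))

end Bounds

theorem norm_coeff_succ_le_pow {R : Type*} [NormedRing R] {F : R⟦X⟧} {a : ℝ}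
    (ha : a ∈ upperBounds (Set.range fun i : {i : ℕ // 2 ≤ i} =>
      ‖coeff (i : ℕ) F‖ ^ ((1 : ℝ) / ((i : ℕ) - 1 : ℝ))))
    {n : ℕ} (hn : n ≠ 0) : ‖coeff (n + 1) F‖ ≤ a ^ n := by
  have h := ha ⟨⟨n + 1, by omega⟩, rfl⟩
  have hexp : (1 : ℝ) / (((n + 1 : ℕ) : ℝ) - 1) = (n : ℝ)⁻¹ := by push_cast; ring
  dsimp only at h
  have ha0 : 0 ≤ a := (Real.rpow_nonneg (norm_nonneg _) _).trans h
  rwa [hexp, Real.rpow_inv_le_iff_of_pos (norm_nonneg _) ha0 (by positivity),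
    Real.rpow_natCast] at h

end PowerSeries

theorem norm_natCast_eq_one_of_not_dvd {K : Type*} [NormedDivisionRing K] {p : ℕ}
    [hp : Fact p.Prime] [CharP K p] {q : ℕ} (hq : ¬ p ∣ q) : ‖(q : K)‖ = 1 := by
  have hq' : (q : ZMod p) ≠ 0 := by rwa [Ne, ZMod.natCast_eq_zero_iff]
  have hfermat : (q : K) ^ (p - 1) = 1 := by
    rw [← map_natCast (ZMod.castHom (dvd_refl p) K), ← map_pow,
      ZMod.pow_card_sub_one_eq_one hq', map_one]
  have := congrArg norm hfermat
  rwa [norm_pow, norm_one, pow_eq_one_iff_of_nonneg (norm_nonneg _)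
    (by have := hp.out.two_le; omega)] at this

section Ultrametric

variable {K : Type*} [NormedField K] [IsUltrametricDist K]

theorem norm_one_sub_pow_le {u : K} (hu : ‖u‖ ≤ 1) (q : ℕ) : ‖1 - u ^ q‖ ≤ ‖1 - u‖ := by
  rw [← mul_neg_geom_sum, norm_mul]
  refine mul_le_of_le_one_right (norm_nonneg _) ?_
  refine IsUltrametricDist.norm_sum_le_of_forall_le_of_nonneg zero_le_one fun i _ => ?_
  rw [norm_pow]
  exact pow_le_one₀ (norm_nonneg _) hu

theorem norm_one_sub_pow_eq {u : K} (hu : ‖1 - u‖ < 1) {q : ℕ} (hq : ‖(q : K)‖ = 1) :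
    ‖1 - u ^ q‖ = ‖1 - u‖ := by
  have hu1 : ‖u‖ ≤ 1 := by
    calc ‖u‖ = ‖1 + -(1 - u)‖ := by rw [← sub_eq_add_neg, sub_sub_cancel]
      _ ≤ max ‖(1 : K)‖ ‖-(1 - u)‖ := IsUltrametricDist.norm_add_le_max _ _
      _ ≤ 1 := max_le norm_one.le (by rw [norm_neg]; exact hu.le)
  have hclose : ‖∑ i ∈ Finset.range q, (u ^ i - 1)‖ < ‖(q : K)‖ := by
    refine hq ▸ lt_of_le_of_lt ?_ hu
    refine IsUltrametricDist.norm_sum_le_of_forall_le_of_nonneg (norm_nonneg _) fun i _ => ?_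
    rw [norm_sub_rev]
    exact norm_one_sub_pow_le hu1 i
  have hgeom : ∑ i ∈ Finset.range q, u ^ i = q + ∑ i ∈ Finset.range q, (u ^ i - 1) := by
    simp [Finset.sum_sub_distrib]
  rw [← mul_neg_geom_sum, norm_mul, hgeom,
    IsUltrametricDist.norm_add_eq_max_of_norm_ne_norm hclose.ne', max_eq_left hclose.le, hq,
    mul_one]

theorem dvd_of_norm_one_sub_pow_lt_one {lam : K} (hlam : ‖lam‖ = 1) {m : ℕ} (hm0 : 0 < m)
    (hm : ‖1 - lam ^ m‖ < 1) (hmin : ∀ n, 1 ≤ n → ‖1 - lam ^ n‖ < 1 → m ≤ n) {n : ℕ}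
    (hn : ‖1 - lam ^ n‖ < 1) : m ∣ n := by
  have hsplit :
      1 - lam ^ (n % m) = (1 - lam ^ n) + lam ^ (n % m) * ((lam ^ m) ^ (n / m) - 1) := by
    rw [← pow_mul, mul_sub, mul_one, ← pow_add, Nat.mod_add_div]
    ring
  have hr : ‖1 - lam ^ (n % m)‖ < 1 := by
    rw [hsplit]
    refine (IsUltrametricDist.norm_add_le_max _ _).trans_lt (max_lt hn ?_)
    rw [norm_mul, norm_pow, hlam, one_pow, one_mul, norm_sub_rev]
    exact (norm_one_sub_pow_le (by rw [norm_pow, hlam, one_pow]) _).trans_lt hm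
  by_contra hdvd
  have := hmin (n % m) (Nat.pos_of_ne_zero (mt Nat.dvd_of_mod_eq_zero hdvd)) hr
  exact this.not_gt (Nat.mod_lt n hm0)

end Ultrametric

theorem self_sub_pow_eq_mul {R : Type*} [Ring R] (x : R) {k : ℕ} (hk : k ≠ 0) :
    x - x ^ k = x * (1 - x ^ (k - 1)) := by
  rw [mul_sub, mul_one, ← pow_succ', Nat.sub_add_cancel (Nat.one_le_iff_ne_zero.2 hk)]

/-- The number of `l ∈ [k', k]` with `l ≡ k' (mod m p)`, i.e. of the indices `l ≤ k` at which
the small divisor `1 - λ^{l-1}` has norm `‖1 - λ^m‖`. -/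
def resonanceCount (k' m p k : ℕ) : ℕ := if k < k' then 0 else (k - k') / (m * p) + 1

theorem resonanceCount_mono (k' m p : ℕ) : Monotone (resonanceCount k' m p) := by
  intro i j hij
  unfold resonanceCount
  split_ifs
  · exact le_rfl
  · exact Nat.zero_le _
  · omega
  · exact Nat.add_le_add_right (Nat.div_le_div_right (by omega)) 1

theorem resonanceCount_lt_of_dvd {k' m p j k : ℕ} (hmp : 0 < m * p) (hk : k' ≤ k)
    (hdvd : m * p ∣ k - k') (hjk : j < k) :
    resonanceCount k' m p j < resonanceCount k' m p k := by
  obtain ⟨c, hc⟩ := hdvd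
  unfold resonanceCount
  rw [if_neg (not_lt.2 hk), hc, Nat.mul_div_cancel_left c hmp]
  split_ifs
  · omega
  · have : (j - k') / (m * p) < c := Nat.div_lt_of_lt_mul (by omega)
    omega

theorem Nat.mul_dvd_sub_of_dvd_sub_one {p m k' k : ℕ} (hp : p.Prime) (hk' : 0 < k')
    (hk'p : p ∣ k') (hk'm : m ∣ k' - 1) (hk : k' ≤ k) (hkp : p ∣ k) (hkm : m ∣ k - 1) :
    m * p ∣ k - k' := by
  have hpm : ¬ p ∣ m := fun hpm => by
    have h := Nat.dvd_sub hk'p (hpm.trans hk'm)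
    rw [Nat.sub_sub_self hk'] at h
    exact hp.not_dvd_one h
  have hmk : m ∣ k - k' := by
    have h := Nat.dvd_sub hkm hk'm
    rwa [show k - 1 - (k' - 1) = k - k' by omega] at h
  exact ((Nat.Prime.coprime_iff_not_dvd hp).2 hpm).symm.mul_dvd_of_dvd_of_dvd hmk
    (Nat.dvd_sub hkp hk'p)

theorem pow_resonanceCount_le {K : Type*} [NormedField K] [IsUltrametricDist K] {p : ℕ}
    (hp : p.Prime) [CharP K p] {lam : K} (hlam : ‖lam‖ = 1) {m : ℕ} (hm0 : 0 < m)
    (hm : ‖1 - lam ^ m‖ < 1) (hmin : ∀ n, 1 ≤ n → ‖1 - lam ^ n‖ < 1 → m ≤ n)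
    {k' : ℕ} (hk' : 0 < k') (hk'p : p ∣ k') (hk'm : m ∣ k' - 1)
    (hk'min : ∀ l, 0 < l → p ∣ l → m ∣ l - 1 → k' ≤ l) {j k : ℕ} (hkp : p ∣ k) (hjk : j < k) :
    ‖1 - lam ^ m‖ ^ resonanceCount k' m p k ≤
      ‖1 - lam ^ (k - 1)‖ * ‖1 - lam ^ m‖ ^ resonanceCount k' m p j := by
  have hD := norm_nonneg (1 - lam ^ m)
  by_cases hkm : m ∣ k - 1
  · have hk'k : k' ≤ k := hk'min k (by omega) hkp hkm
    have hcount : resonanceCount k' m p j + 1 ≤ resonanceCount k' m p k :=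
      resonanceCount_lt_of_dvd (Nat.mul_pos hm0 hp.pos) hk'k
        (Nat.mul_dvd_sub_of_dvd_sub_one hp hk' hk'p hk'm hk'k hkp hkm) hjk
    obtain ⟨q, hq⟩ := hkm
    have hpq : ¬ p ∣ q := fun hpq => by
      have h := Nat.dvd_sub hkp (hq ▸ Dvd.dvd.mul_left hpq m)
      rw [Nat.sub_sub_self (by omega)] at h
      exact hp.not_dvd_one h
    have := Fact.mk hp
    rw [hq, pow_mul, norm_one_sub_pow_eq hm (norm_natCast_eq_one_of_not_dvd hpq), ← pow_succ']
    exact pow_le_pow_of_le_one hD hm.le hcount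
  · have hsmall : 1 ≤ ‖1 - lam ^ (k - 1)‖ :=
      not_lt.1 (mt (dvd_of_norm_one_sub_pow_lt_one hlam hm0 hm hmin) hkm)
    calc ‖1 - lam ^ m‖ ^ resonanceCount k' m p k ≤ ‖1 - lam ^ m‖ ^ resonanceCount k' m p j :=
          pow_le_pow_of_le_one hD hm.le (resonanceCount_mono k' m p hjk.le)
      _ ≤ ‖1 - lam ^ (k - 1)‖ * ‖1 - lam ^ m‖ ^ resonanceCount k' m p j :=
          le_mul_of_one_le_left (pow_nonneg hD _) hsmall

namespace SchroderEq

variable {K : Type*} {lam : K} {F : K⟦X⟧} {b : ℕ → K}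

theorem sub_pow_mul_eq_sum [Field K] (hS : SchroderEq lam F b) (hF0 : coeff 0 F = 0)
    (hF1 : coeff 1 F = lam) (k : ℕ) :
    (lam - lam ^ k) * b k = ∑ j ∈ Finset.range k, b j * coeff k (F ^ j) := by
  have h := hS k
  rw [map_sum, Finset.sum_range_succ] at h
  simp only [coeff_C_mul] at h
  rw [coeff_pow_self hF0, hF1] at h
  linear_combination -h

theorem eq_zero_of_not_dvd [Field K] {p : ℕ} [ExpChar K p] (hS : SchroderEq lam F b)
    (hF0 : coeff 0 F = 0) (hF1 : coeff 1 F = lam)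
    (hFdvd : ∀ i, 2 ≤ i → coeff i F ≠ 0 → p ∣ i) (hlam0 : lam ≠ 0)
    (hroot : ∀ n, 1 ≤ n → lam ^ n ≠ 1) (k : ℕ) (hk : 2 ≤ k) (hpk : ¬ p ∣ k) : b k = 0 := by
  induction k using Nat.strong_induction_on with
  | _ k ih =>
  have hsum : ∑ j ∈ Finset.range k, b j * coeff k (F ^ j) = 0 := by
    refine Finset.sum_eq_zero fun j hj => ?_
    by_cases hpj : p ∣ j
    · rw [coeff_pow_eq_zero_of_not_dvd F hpj hpk, mul_zero]
    obtain rfl | hj1 : j = 1 ∨ 2 ≤ j := by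
      have : j ≠ 0 := by rintro rfl; exact hpj (dvd_zero p)
      omega
    · rw [pow_one, not_imp_comm.1 (hFdvd k hk) hpk, mul_zero]
    · rw [ih j (Finset.mem_range.1 hj) hj1 hpj, zero_mul]
  have hne : lam - lam ^ k ≠ 0 := by
    rw [self_sub_pow_eq_mul lam (by omega)]
    exact mul_ne_zero hlam0 (sub_ne_zero.2 (hroot (k - 1) (by omega)).symm)
  have h := hS.sub_pow_mul_eq_sum hF0 hF1 k
  rw [hsum] at h
  exact (mul_eq_zero.1 h).resolve_left hne

theorem norm_le_pow_div [NormedField K] [IsUltrametricDist K] (hS : SchroderEq lam F b)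
    (hF0 : coeff 0 F = 0) (hF1 : coeff 1 F = lam)
    (hlam : ‖lam‖ = 1) (hb1 : b 1 = 1) {a : ℝ} (hF : ∀ n, ‖coeff (n + 1) F‖ ≤ a ^ n)
    {w : ℕ → ℝ} (hw0 : ∀ k, 0 < w k) (hw1 : w 1 ≤ 1)
    (hw : ∀ k, 2 ≤ k → b k ≠ 0 → ∀ j < k, w k ≤ ‖1 - lam ^ (k - 1)‖ * w j)
    (k : ℕ) (hk : 1 ≤ k) : ‖b k‖ ≤ a ^ (k - 1) / w k := by
  induction k using Nat.strong_induction_on with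
  | _ k ih =>
  have ha : ∀ n, 0 ≤ a ^ n := fun n => (norm_nonneg _).trans (hF n)
  obtain rfl | hk2 : k = 1 ∨ 2 ≤ k := by omega
  · rw [hb1, norm_one, pow_zero]
    exact (one_le_div (hw0 1)).2 hw1
  by_cases hbk : b k = 0
  · rw [hbk, norm_zero]
    exact div_nonneg (ha _) (hw0 k).le
  set d := ‖1 - lam ^ (k - 1)‖
  have hd : 0 < d :=
    (mul_pos_iff_of_pos_right (hw0 1)).1 ((hw0 k).trans_le (hw k hk2 hbk 1 hk2))
  have hterm : ∀ j < k, ‖b j * coeff k (F ^ j)‖ ≤ d * (a ^ (k - 1) / w k) := by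
    intro j hj
    obtain rfl | hj1 : j = 0 ∨ 1 ≤ j := by omega
    · rw [pow_zero, coeff_one, if_neg (by omega), mul_zero, norm_zero]
      exact mul_nonneg hd.le (div_nonneg (ha _) (hw0 k).le)
    calc ‖b j * coeff k (F ^ j)‖ ≤ ‖b j‖ * ‖coeff k (F ^ j)‖ := norm_mul_le _ _
      _ ≤ a ^ (j - 1) / w j * a ^ (k - j) :=
          mul_le_mul (ih j hj hj1) (norm_coeff_pow_le_pow_sub hF0 hF j k) (norm_nonneg _)
            (div_nonneg (ha _) (hw0 j).le)
      _ = a ^ (k - 1) / w j := by rw [div_mul_eq_mul_div, ← pow_add]; congr 2; omega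
      _ ≤ a ^ (k - 1) / (w k / d) :=
          div_le_div_of_nonneg_left (ha _) (div_pos (hw0 k) hd)
            ((div_le_iff₀' hd).2 (hw k hk2 hbk j hj))
      _ = d * (a ^ (k - 1) / w k) := by field_simp
  refine le_of_mul_le_mul_left ?_ hd
  calc d * ‖b k‖ = ‖(lam - lam ^ k) * b k‖ := by
        rw [self_sub_pow_eq_mul lam (by omega), norm_mul, norm_mul, hlam, one_mul]
    _ = ‖∑ j ∈ Finset.range k, b j * coeff k (F ^ j)‖ := by
        rw [hS.sub_pow_mul_eq_sum hF0 hF1]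
    _ ≤ d * (a ^ (k - 1) / w k) :=
        IsUltrametricDist.norm_sum_le_of_forall_le_of_nonneg
          (mul_nonneg hd.le (div_nonneg (ha _) (hw0 k).le))
          fun j hj => hterm j (Finset.mem_range.1 hj)

end SchroderEq

theorem schroder_coeff_bound_general {K : Type*} [NontriviallyNormedField K]
    [IsUltrametricDist K] (p : ℕ) (hp : p.Prime) [CharP K p]
    (lam : K) (hlam : ‖lam‖ = 1) (hroot : ∀ n : ℕ, 1 ≤ n → lam ^ n ≠ 1)
    (m : ℕ) (hm1 : 1 ≤ m) (hm2 : ‖1 - lam ^ m‖ < 1)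
    (hmmin : ∀ n : ℕ, 1 ≤ n → ‖1 - lam ^ n‖ < 1 → m ≤ n)
    (k' : ℕ) (hk'pos : 0 < k') (hk'p : p ∣ k') (hk'm : m ∣ k' - 1)
    (hk'min : ∀ l : ℕ, 0 < l → p ∣ l → m ∣ l - 1 → k' ≤ l)
    (F : PowerSeries K) (hF0 : PowerSeries.coeff (R := K) 0 F = 0)
    (hF1 : PowerSeries.coeff (R := K) 1 F = lam)
    (hFdvd : ∀ i : ℕ, 2 ≤ i → PowerSeries.coeff (R := K) i F ≠ 0 → p ∣ i)
    (a : ℝ)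
    (ha : IsLUB (Set.range fun i : {i : ℕ // 2 ≤ i} =>
      ‖PowerSeries.coeff (R := K) (i : ℕ) F‖ ^ ((1 : ℝ) / ((i : ℕ) - 1 : ℝ))) a)
    (b : ℕ → K) (hb1 : b 1 = 1)
    (hS : SchroderEq lam F b) :
    ∀ k : ℕ, 2 ≤ k →
      ‖b k‖ ≤ a ^ (k - 1) /
        ‖1 - lam ^ m‖ ^ (if k < k' then 0 else (k - k') / (m * p) + 1) := by
  have := Fact.mk hp
  have hD : 0 < ‖1 - lam ^ m‖ := norm_pos_iff.2 (sub_ne_zero.2 (hroot m hm1).symm)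
  have hlam0 : lam ≠ 0 := norm_ne_zero_iff.1 (by rw [hlam]; exact one_ne_zero)
  have hF : ∀ n, ‖coeff (n + 1) F‖ ≤ a ^ n := by
    rintro (_ | n)
    · rw [hF1, hlam, pow_zero]
    · exact norm_coeff_succ_le_pow ha.1 n.succ_ne_zero
  have hcount1 : resonanceCount k' m p 1 = 0 :=
    if_pos ((hp.two_le).trans (Nat.le_of_dvd hk'pos hk'p))
  have hdvd_of_ne_zero : ∀ k, 2 ≤ k → b k ≠ 0 → p ∣ k := fun k hk hbk =>
    not_not.1 (mt (hS.eq_zero_of_not_dvd hF0 hF1 hFdvd hlam0 hroot k hk) hbk)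
  intro k hk
  exact hS.norm_le_pow_div hF0 hF1 hlam hb1 hF
    (w := fun k => ‖1 - lam ^ m‖ ^ resonanceCount k' m p k) (fun _ => pow_pos hD _)
    (by simp [hcount1])
    (fun k hk hbk j hj => pow_resonanceCount_le hp hlam hm1 hm2 hmmin hk'pos hk'p hk'm hk'min
      (hdvd_of_ne_zero k hk hbk) hj)
    k (by omega)

/-- Coefficient bound for the conjugacy of `f(x) = λx + ∑_{p ∣ i} aᵢ xⁱ`:
`‖b_k‖ ≤ a^{k-1} / ‖1-λ^m‖^{⌊(k-k')/(mp)+1⌋}` for all `k ≥ 2`, where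
`a = sup_{i ≥ 2} ‖aᵢ‖^{1/(i-1)}`, `m` is the least positive integer with `‖1-λ^m‖ < 1`,
and `k'` is the least positive integer with `p ∣ k'` and `m ∣ k'-1`; the floor exponent is
taken to be `0` when `k < k'`. -/
theorem schroder_coeff_bound {K : Type*} [NontriviallyNormedField K]
    [IsUltrametricDist K] [CompleteSpace K] (p : ℕ) (hp : p.Prime) [CharP K p]
    (lam : K) (hlam : ‖lam‖ = 1) (hroot : ∀ n : ℕ, 1 ≤ n → lam ^ n ≠ 1)
    (m : ℕ) (hm1 : 1 ≤ m) (hm2 : ‖1 - lam ^ m‖ < 1)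
    (hmmin : ∀ n : ℕ, 1 ≤ n → ‖1 - lam ^ n‖ < 1 → m ≤ n)
    (k' : ℕ) (hk'pos : 0 < k') (hk'p : p ∣ k') (hk'm : m ∣ k' - 1)
    (hk'min : ∀ l : ℕ, 0 < l → p ∣ l → m ∣ l - 1 → k' ≤ l)
    (F : PowerSeries K) (hF0 : PowerSeries.coeff (R := K) 0 F = 0)
    (hF1 : PowerSeries.coeff (R := K) 1 F = lam)
    (hFdvd : ∀ i : ℕ, 2 ≤ i → PowerSeries.coeff (R := K) i F ≠ 0 → p ∣ i)
    (a : ℝ)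
    (ha : IsLUB (Set.range fun i : {i : ℕ // 2 ≤ i} =>
      ‖PowerSeries.coeff (R := K) (i : ℕ) F‖ ^ ((1 : ℝ) / ((i : ℕ) - 1 : ℝ))) a)
    (b : ℕ → K) (hb0 : b 0 = 0) (hb1 : b 1 = 1)
    (hS : SchroderEq lam F b) :
    ∀ k : ℕ, 2 ≤ k →
      ‖b k‖ ≤ a ^ (k - 1) /
        ‖1 - lam ^ m‖ ^ (if k < k' then 0 else (k - k') / (m * p) + 1) :=
  schroder_coeff_bound_general p hp lam hlam hroot m hm1 hm2 hmmin k' hk'pos hk'p hk'm hk'min F hF0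
    hF1 hFdvd a ha b hb1 hS
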